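/- Let (V,φ) be a bilinear space, G its isometry group, and V_∞ the canonical totally isotropic G-invariant subspace of the odd part V_odd. Then G acts transitively on the set of totally isotropic subspaces W of V_odd satisfying V_odd = V_∞ ⊕ W; more precisely, the pointwise stabilizer G[ⁿ∞V] of ⁿ∞V acts simply transitively (regularly) on this set. In particular, for any two totally isotropic complements W, W' of V_∞ in V_odd there is a unique isometry of V_odd fixing ⁿ∞V pointwise carrying W onto W'. -/

import Mathlib

/-! Since `V_∞` contains `L(V)` and `R(V)`, a vector of a totally isotropic complement `W'` of
`V_∞` that is orthogonal to `V_∞` lies in `R(V_∞ ⊕ W') = R(V) ⊆ V_∞`, hence vanishes. This gives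
uniqueness: two isometries fixing `V_∞` and sending `W` into `W'` differ on `W` by such vectors.
The same argument gives `L(V_∞) = V_∞`. For existence, the shear `a + w ↦ a + π' w` is an isometry
because `π' w - w ∈ V_∞` and `V_∞`, `W`, `W'` are totally isotropic. -/

variable {F V : Type*} [Field F] [AddCommGroup V] [Module F V]

/-- Left orthogonal complement of a subspace with respect to a bilinear form. -/
def Lc (φ : V →ₗ[F] V →ₗ[F] F) (U : Submodule F V) : Submodule F V where
  carrier := {v | ∀ u ∈ U, φ v u = 0}
  add_mem' := by
    intro a b ha hb u hu
    simp [map_add, ha u hu, hb u hu]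
  zero_mem' := by intro u hu; simp
  smul_mem' := by
    intro c a ha u hu
    simp [ha u hu]

/-- Right orthogonal complement of a subspace with respect to a bilinear form. -/
def Rc (φ : V →ₗ[F] V →ₗ[F] F) (U : Submodule F V) : Submodule F V where
  carrier := {v | ∀ u ∈ U, φ u v = 0}
  add_mem' := by
    intro a b ha hb u hu
    simp [map_add, ha u hu, hb u hu]
  zero_mem' := by intro u hu; simp
  smul_mem' := by
    intro c a ha u hu
    simp [ha u hu]

/-- The odd alternating iterates `L^{2k+1}(V) = L(R(L(...(V))))`. -/
def Lodd (φ : V →ₗ[F] V →ₗ[F] F) : ℕ → Submodule F V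
  | 0 => Lc φ ⊤
  | k + 1 => Lc φ (Rc φ (Lodd φ k))

/-- The odd alternating iterates `R^{2k+1}(V) = R(L(R(...(V))))`. -/
def Rodd (φ : V →ₗ[F] V →ₗ[F] F) : ℕ → Submodule F V
  | 0 => Rc φ ⊤
  | k + 1 => Rc φ (Lc φ (Rodd φ k))

/-- `V_∞ = L_∞(V) + R_∞(V)`. -/
def Vinf (φ : V →ₗ[F] V →ₗ[F] F) : Submodule F V :=
  (⨆ k, Lodd φ k) ⊔ (⨆ k, Rodd φ k)

/-- `g` is an isometry of the bilinear space `(V, φ)`. -/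
def IsIsom (φ : V →ₗ[F] V →ₗ[F] F) (g : V ≃ₗ[F] V) : Prop :=
  ∀ v w : V, φ (g v) (g w) = φ v w

open Submodule

section Shear

variable {R M : Type*} [Ring R] [AddCommGroup M] [Module R M] {I W W' : Submodule R M}

/-- `a + w ↦ a + π' w` for `a ∈ I`, `w ∈ W`, where `π'` projects onto `W'` along `I`. -/
noncomputable def complementShear (hc : IsCompl I W) (hc' : IsCompl I W') : M ≃ₗ[R] M :=
  (prodEquivOfIsCompl I W hc).symm ≪≫ₗ
    (LinearEquiv.refl R I).prodCongr
      ((quotientEquivOfIsCompl I W hc).symm ≪≫ₗ quotientEquivOfIsCompl I W' hc') ≪≫ₗ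
    prodEquivOfIsCompl I W' hc'

theorem complementShear_apply_of_mem_left (hc : IsCompl I W) (hc' : IsCompl I W') {a : M}
    (ha : a ∈ I) : complementShear hc hc' a = a := by
  simp [complementShear, projection_apply_of_mem_left hc ha,
    projection_apply_of_mem_right hc.symm ha]

theorem complementShear_apply_of_mem_right (hc : IsCompl I W) (hc' : IsCompl I W') {w : M}
    (hw : w ∈ W) : complementShear hc hc' w = W'.projection I hc'.symm w := by
  simp [complementShear, projection_apply_of_mem_right hc hw,
    projection_apply_of_mem_left hc.symm hw]

theorem complementShear_apply_mem (hc : IsCompl I W) (hc' : IsCompl I W') {w : M} (hw : w ∈ W) :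
    complementShear hc hc' w ∈ W' := by
  rw [complementShear_apply_of_mem_right hc hc' hw]
  exact projection_apply_mem _ _

theorem complementShear_apply_sub_mem (hc : IsCompl I W) (hc' : IsCompl I W') {w : M}
    (hw : w ∈ W) : complementShear hc hc' w - w ∈ I := by
  rw [complementShear_apply_of_mem_right hc hc' hw, sub_mem_comm_iff]
  exact sub_projection_mem hc'.symm w

theorem map_complementShear (hc : IsCompl I W) (hc' : IsCompl I W') :
    W.map (complementShear hc hc').toLinearMap = W' := by
  refine le_antisymm (map_le_iff_le_comap.2 fun w hw ↦ complementShear_apply_mem hc hc' hw)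
    fun w' hw' ↦ ⟨W.projection I hc.symm w', projection_apply_mem _ _, ?_⟩
  rw [LinearEquiv.coe_coe, complementShear_apply_of_mem_right hc hc' (projection_apply_mem _ _),
    projection_eq_self_sub_projection hc, map_sub, projection_apply_of_mem_left hc'.symm hw',
    projection_apply_of_mem_right hc'.symm (projection_apply_mem _ _), sub_zero]

end Shear

section Isotropy

variable (φ : V →ₗ[F] V →ₗ[F] F)

def IsTotallyIsotropic (U : Submodule F V) : Prop :=
  ∀ x ∈ U, ∀ y ∈ U, φ x y = 0

theorem Lc_sup (U U' : Submodule F V) : Lc φ (U ⊔ U') = Lc φ U ⊓ Lc φ U' := by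
  ext x
  refine ⟨fun h ↦ ⟨fun u hu ↦ h u (mem_sup_left hu), fun u hu ↦ h u (mem_sup_right hu)⟩, ?_⟩
  rintro ⟨h, h'⟩ _ hv
  obtain ⟨u, hu, u', hu', rfl⟩ := mem_sup.1 hv
  simp [h u hu, h' u' hu']

theorem Rc_sup (U U' : Submodule F V) : Rc φ (U ⊔ U') = Rc φ U ⊓ Rc φ U' := by
  ext x
  refine ⟨fun h ↦ ⟨fun u hu ↦ h u (mem_sup_left hu), fun u hu ↦ h u (mem_sup_right hu)⟩, ?_⟩
  rintro ⟨h, h'⟩ _ hv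
  obtain ⟨u, hu, u', hu', rfl⟩ := mem_sup.1 hv
  simp [h u hu, h' u' hu']

theorem Lc_top_le_Vinf : Lc φ ⊤ ≤ Vinf φ :=
  (le_iSup (Lodd φ) 0).trans le_sup_left

theorem Rc_top_le_Vinf : Rc φ ⊤ ≤ Vinf φ :=
  (le_iSup (Rodd φ) 0).trans le_sup_right

variable {φ} {U I W : Submodule F V}

theorem IsTotallyIsotropic.le_Lc (hU : IsTotallyIsotropic φ U) : U ≤ Lc φ U :=
  fun x hx y hy ↦ hU x hx y hy

theorem IsTotallyIsotropic.le_Rc (hU : IsTotallyIsotropic φ U) : U ≤ Rc φ U :=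
  fun x hx y hy ↦ hU y hy x hx

theorem Lc_eq_self_of_isCompl (hI : IsTotallyIsotropic φ I) (hW : IsTotallyIsotropic φ W)
    (hc : IsCompl I W) (hL : Lc φ ⊤ ≤ I) : Lc φ I = I := by
  have hLW : Lc φ I ⊓ W ≤ I ⊓ W := by
    refine le_inf (le_trans ?_ hL) inf_le_right
    rw [← hc.sup_eq_top, Lc_sup]
    exact inf_le_inf_left _ hW.le_Lc
  calc Lc φ I = (I ⊔ W) ⊓ Lc φ I := by rw [hc.sup_eq_top, top_inf_eq]
    _ = I ⊔ W ⊓ Lc φ I := sup_inf_assoc_of_le W hI.le_Lc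
    _ = I := by
      rw [inf_comm, eq_bot_iff.2 (hLW.trans (disjoint_iff.1 hc.disjoint).le), sup_bot_eq]

end Isotropy

section Isometries

variable {φ : V →ₗ[F] V →ₗ[F] F} {I W W' : Submodule F V}

theorem isIsom_complementShear (hI : IsTotallyIsotropic φ I) (hW : IsTotallyIsotropic φ W)
    (hW' : IsTotallyIsotropic φ W') (hc : IsCompl I W) (hc' : IsCompl I W') :
    IsIsom φ (complementShear hc hc') := by
  have hleft : ∀ a ∈ I, ∀ w ∈ W, φ a (complementShear hc hc' w) = φ a w := fun a ha w hw ↦ by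
    rw [← sub_eq_zero, ← map_sub]
    exact hI a ha _ (complementShear_apply_sub_mem hc hc' hw)
  have hright : ∀ w ∈ W, ∀ a ∈ I, φ (complementShear hc hc' w) a = φ w a := fun w hw a ha ↦ by
    rw [← sub_eq_zero, ← LinearMap.sub_apply, ← map_sub]
    exact hI _ (complementShear_apply_sub_mem hc hc' hw) a ha
  intro x y
  obtain ⟨a, w, ha, hw, rfl⟩ := codisjoint_iff_exists_add_eq.1 hc.codisjoint x
  obtain ⟨b, u, hb, hu, rfl⟩ := codisjoint_iff_exists_add_eq.1 hc.codisjoint y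
  simp only [map_add, LinearMap.add_apply, complementShear_apply_of_mem_left hc hc' ha,
    complementShear_apply_of_mem_left hc hc' hb, hleft a ha u hu, hright w hw b hb,
    hW' _ (complementShear_apply_mem hc hc' hw) _ (complementShear_apply_mem hc hc' hu),
    hW w hw u hu]

theorem eq_of_isIsom_of_fix_of_mapsTo (hR : Rc φ ⊤ ≤ I) (hW' : IsTotallyIsotropic φ W')
    (hc : IsCompl I W) (hc' : IsCompl I W') {g₁ g₂ : V ≃ₗ[F] V}
    (h₁ : IsIsom φ g₁) (h₂ : IsIsom φ g₂) (hfix₁ : ∀ a ∈ I, g₁ a = a) (hfix₂ : ∀ a ∈ I, g₂ a = a)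
    (hmaps₁ : ∀ w ∈ W, g₁ w ∈ W') (hmaps₂ : ∀ w ∈ W, g₂ w ∈ W') : g₁ = g₂ := by
  have pairing : ∀ g : V ≃ₗ[F] V, IsIsom φ g → (∀ a ∈ I, g a = a) →
      ∀ a ∈ I, ∀ w, φ a (g w) = φ a w := fun g hg hfix a ha w ↦ by
    rw [← hg a w, hfix a ha]
  have agree_on_W : ∀ w ∈ W, g₁ w = g₂ w := by
    intro w hw
    have hdW' : g₁ w - g₂ w ∈ W' := sub_mem (hmaps₁ w hw) (hmaps₂ w hw)
    have hdI : g₁ w - g₂ w ∈ Rc φ I := fun a ha ↦ by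
      rw [map_sub, pairing g₁ h₁ hfix₁ a ha, pairing g₂ h₂ hfix₂ a ha, sub_self]
    have hd_rad : g₁ w - g₂ w ∈ Rc φ ⊤ := by
      rw [← hc'.sup_eq_top, Rc_sup]
      exact ⟨hdI, hW'.le_Rc hdW'⟩
    exact sub_eq_zero.1 (disjoint_def.1 hc'.disjoint _ (hR hd_rad) hdW')
  ext x
  obtain ⟨a, w, ha, hw, rfl⟩ := codisjoint_iff_exists_add_eq.1 hc.codisjoint x
  rw [map_add, map_add, hfix₁ a ha, hfix₂ a ha, agree_on_W w hw]

end Isometries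

theorem regular_action_on_totally_isotropic_complements_general
    (φ : V →ₗ[F] V →ₗ[F] F)
    (hVinf_iso : ∀ x ∈ Vinf φ, ∀ y ∈ Vinf φ, φ x y = 0) :
    ∀ W W' : Submodule F V,
      (∀ x ∈ W, ∀ y ∈ W, φ x y = 0) →
      (∀ x ∈ W', ∀ y ∈ W', φ x y = 0) →
      IsCompl (Vinf φ) W → IsCompl (Vinf φ) W' →
      (∃ g : V ≃ₗ[F] V, IsIsom φ g ∧ W.map g.toLinearMap = W') ∧
      (∃! g : V ≃ₗ[F] V, IsIsom φ g ∧ (∀ v ∈ Lc φ (Vinf φ), g v = v) ∧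
        W.map g.toLinearMap = W') := by
  intro W W' hW hW' hc hc'
  have hLc : Lc φ (Vinf φ) = Vinf φ :=
    Lc_eq_self_of_isCompl hVinf_iso hW hc (Lc_top_le_Vinf φ)
  have hg := isIsom_complementShear hVinf_iso hW hW' hc hc'
  have hmap := map_complementShear hc hc'
  refine ⟨⟨_, hg, hmap⟩, _, ⟨hg, fun v hv ↦ complementShear_apply_of_mem_left hc hc' (hLc.le hv),
    hmap⟩, ?_⟩
  rintro g ⟨hg', hfix, rfl⟩
  exact eq_of_isIsom_of_fix_of_mapsTo (Rc_top_le_Vinf φ) hW' hc hc' hg' hg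
    (fun a ha ↦ hfix a (hLc.ge ha)) (fun a ha ↦ complementShear_apply_of_mem_left hc hc' ha)
    (fun w hw ↦ mem_map_of_mem hw) (fun w hw ↦ complementShear_apply_mem hc hc' hw)

theorem regular_action_on_totally_isotropic_complements
    [FiniteDimensional F V] (φ : V →ₗ[F] V →ₗ[F] F)
    (hVinf_iso : ∀ x ∈ Vinf φ, ∀ y ∈ Vinf φ, φ x y = 0) :
    ∀ W W' : Submodule F V,
      (∀ x ∈ W, ∀ y ∈ W, φ x y = 0) →
      (∀ x ∈ W', ∀ y ∈ W', φ x y = 0) →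
      IsCompl (Vinf φ) W → IsCompl (Vinf φ) W' →
      (∃ g : V ≃ₗ[F] V, IsIsom φ g ∧ W.map g.toLinearMap = W') ∧
      (∃! g : V ≃ₗ[F] V, IsIsom φ g ∧ (∀ v ∈ Lc φ (Vinf φ), g v = v) ∧
        W.map g.toLinearMap = W') :=
  regular_action_on_totally_isotropic_complements_general φ hVinf_iso
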